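/- Let G be a torsion-free group, C ⊆ G finite with |C| ≥ 3, and U a 2-atom for C. Then |U| ≤ |C| - 1. -/

import Mathlib

/-!
Fix `c₀ ∈ C`. Since `U` is a 2-atom of size at least 3, deleting any `u ∈ U` must not lower
`|UC| - |U|`, so `u c₀` has a second representation `u' c` with `c ≠ c₀`. Sending `u` to such
a `c` is injective: if `u₁ ≠ u₂` both receive `c`, then `g = u₂ u₁⁻¹` maps both `u₁` and
`u₁ c₀ c⁻¹` into `U`, so `|U ∩ gU| ≥ 2`. That is impossible, because the submodularity of
`X ↦ |XC|` makes `U ∩ gU` a smaller 2-fragment unless `gU = U`, which torsion-freeness forbids.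
Hence `|U| ≤ |C \ {c₀}|`.
-/

open Pointwise

/-- The Mathlib (2024) definition of `Monoid.IsTorsionFree`, removed since. -/
def Monoid.IsTorsionFree (G : Type*) [Monoid G] : Prop :=
  ∀ g : G, g ≠ 1 → ¬IsOfFinOrder g

/-- `V` is an `n`-fragment for `C`: `|V| ≥ n` and `|VC| - |V|` attains the minimum
`κ_n(C) = min {|XC| - |X| : X ⊆ G finite, |X| ≥ n}`. -/
def IsNFragment {G : Type*} [Group G] [DecidableEq G] (n : ℕ) (C V : Finset G) : Prop :=
  n ≤ V.card ∧ ∀ X : Finset G, n ≤ X.card →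
    ((V * C).card : ℤ) - V.card ≤ ((X * C).card : ℤ) - X.card

/-- `U` is an `n`-atom for `C`: an `n`-fragment of minimal cardinality. -/
def IsNAtom {G : Type*} [Group G] [DecidableEq G] (n : ℕ) (C U : Finset G) : Prop :=
  IsNFragment n C U ∧ ∀ V : Finset G, IsNFragment n C V → U.card ≤ V.card

namespace Finset

variable {G : Type*} [Group G] [DecidableEq G]

theorem card_inter_mul_add_card_union_mul_le (A B C : Finset G) :
    ((A ∩ B) * C).card + ((A ∪ B) * C).card ≤ (A * C).card + (B * C).card :=
  calc ((A ∩ B) * C).card + ((A ∪ B) * C).card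
      ≤ ((A * C) ∩ (B * C)).card + ((A * C) ∪ (B * C)).card := by
        rw [union_mul]; gcongr; exact inter_mul_subset
    _ = (A * C).card + (B * C).card := card_inter_add_card_union _ _

theorem eq_one_of_smul_finset_eq (hG : Monoid.IsTorsionFree G) {g : G} {U : Finset G}
    (hU : U.Nonempty) (hgU : g • U = U) : g = 1 := by
  by_contra hg
  obtain ⟨u, hu⟩ := hU
  have hstab : g ∈ MulAction.stabilizer G U := hgU
  have hpow : ∀ n : ℕ, g ^ n * u ∈ (U : Set G) := fun n => by
    rw [← smul_eq_mul, ← (Subgroup.pow_mem _ hstab n : g ^ n • U = U)]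
    exact smul_mem_smul_finset hu
  have hinj : Function.Injective fun n : ℕ => g ^ n * u :=
    (mul_left_injective u).comp (injective_pow_iff_not_isOfFinOrder.2 (hG g hg))
  exact Set.infinite_of_injective_forall_mem hinj hpow U.finite_toSet

theorem eq_of_mul_mem_of_card_inter_smul_le_one {U : Finset G}
    (hU : ∀ g : G, g ≠ 1 → (U ∩ g • U).card ≤ 1) {h : G} (hh : h ≠ 1) {u₁ u₂ : G}
    (hu₁ : u₁ ∈ U) (hu₂ : u₂ ∈ U) (hu₁h : u₁ * h ∈ U) (hu₂h : u₂ * h ∈ U) : u₁ = u₂ := by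
  by_contra hne
  set g := u₂ * u₁⁻¹
  have hg : g ≠ 1 := fun h1 => hne (mul_inv_eq_one.1 h1).symm
  have h₁ : u₂ ∈ U ∩ g • U := mem_inter.2 ⟨hu₂, mem_smul_finset.2 ⟨u₁, hu₁, by simp [g]⟩⟩
  have h₂ : u₂ * h ∈ U ∩ g • U :=
    mem_inter.2 ⟨hu₂h, mem_smul_finset.2 ⟨u₁ * h, hu₁h, by simp [g, mul_assoc]⟩⟩
  have htwo : 1 < (U ∩ g • U).card := one_lt_card.2 ⟨u₂, h₁, u₂ * h, h₂, by simpa using hh⟩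
  exact absurd (hU g hg) (by omega)

theorem card_le_card_sub_one_of_exists_mul_eq {U C : Finset G}
    (hU : ∀ g : G, g ≠ 1 → (U ∩ g • U).card ≤ 1) {c₀ : G} (hc₀ : c₀ ∈ C)
    (hrep : ∀ u ∈ U, ∃ u' ∈ U, ∃ c ∈ C, c ≠ c₀ ∧ u' * c = u * c₀) :
    U.card ≤ C.card - 1 := by
  choose! u' hu' c hc hcc₀ hmul using hrep
  have hmaps : Set.MapsTo c U (C.erase c₀) := fun u hu => mem_erase.2 ⟨hcc₀ u hu, hc u hu⟩
  have hinj : Set.InjOn c U := by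
    intro u₁ hu₁ u₂ hu₂ heq
    refine eq_of_mul_mem_of_card_inter_smul_le_one hU (h := c₀ * (c u₁)⁻¹) ?_ hu₁ hu₂ ?_ ?_
    · exact fun h1 => hcc₀ u₁ hu₁ (mul_inv_eq_one.1 h1).symm
    · rw [← mul_assoc, ← hmul u₁ hu₁, mul_inv_cancel_right]; exact hu' u₁ hu₁
    · rw [heq, ← mul_assoc, ← hmul u₂ hu₂, mul_inv_cancel_right]; exact hu' u₂ hu₂
  simpa [card_erase_of_mem hc₀] using card_le_card_of_injOn c hmaps hinj

end Finset

namespace IsNAtom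

open Finset

variable {G : Type*} [Group G] [DecidableEq G] {n : ℕ} {C U : Finset G}

theorem sub_lt_sub_of_card_lt (hU : IsNAtom n C U) {V : Finset G} (hnV : n ≤ V.card)
    (hVU : V.card < U.card) : ((U * C).card : ℤ) - U.card < (V * C).card - V.card := by
  by_contra! h
  exact absurd (hU.2 V ⟨hnV, fun X hX => h.trans (hU.1.2 X hX)⟩) (by omega)

theorem exists_ne_mul_eq (hU : IsNAtom n C U) (hn : n < U.card) {u c : G} (hu : u ∈ U)
    (hc : c ∈ C) : ∃ u' ∈ U, ∃ c' ∈ C, c' ≠ c ∧ u' * c' = u * c := by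
  by_contra! huniq
  have hsub : U.erase u * C ⊆ (U * C).erase (u * c) := by
    intro x hx
    obtain ⟨a, ha, b, hb, rfl⟩ := mem_mul.1 hx
    refine mem_erase.2 ⟨fun hab => ?_, mul_mem_mul (mem_of_mem_erase ha) hb⟩
    obtain rfl : b = c := by
      by_contra hbc
      exact huniq a (mem_of_mem_erase ha) b hb hbc hab
    exact ne_of_mem_erase ha (mul_right_cancel hab)
  have hlt := hU.sub_lt_sub_of_card_lt (V := U.erase u)
    (by rw [card_erase_of_mem hu]; omega) (card_erase_lt_of_mem hu)
  have hle := card_le_card hsub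
  have hpos := card_pos.2 ⟨u * c, mul_mem_mul hu hc⟩
  rw [card_erase_of_mem (mul_mem_mul hu hc)] at hle
  rw [card_erase_of_mem hu] at hlt
  omega

theorem smul_eq_of_le_card_inter (hU : IsNAtom n C U) {g : G} (h : n ≤ (U ∩ g • U).card) :
    g • U = U := by
  have hsub := card_inter_mul_add_card_union_mul_le U (g • U) C
  have hcard := card_inter_add_card_union U (g • U)
  have hunion := hU.1.2 (U ∪ g • U)
    (h.trans (card_le_card (inter_subset_left.trans subset_union_left)))
  rw [smul_mul_assoc, card_smul_finset] at hsub
  rw [card_smul_finset] at hcard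
  have hinter : U.card ≤ (U ∩ g • U).card := by
    by_contra! hlt
    have := hU.sub_lt_sub_of_card_lt h hlt
    omega
  have hUg : U ⊆ g • U :=
    (eq_of_subset_of_card_le inter_subset_left hinter).symm.subset.trans inter_subset_right
  exact (eq_of_subset_of_card_le hUg (card_smul_finset g U).le).symm

theorem card_inter_smul_lt (hG : Monoid.IsTorsionFree G) (hU : IsNAtom n C U) (hn : 0 < n)
    {g : G} (hg : g ≠ 1) : (U ∩ g • U).card < n := by
  by_contra! h
  have hne : U.Nonempty := card_pos.1 (hn.trans_le hU.1.1)
  exact hg (eq_one_of_smul_finset_eq hG hne (hU.smul_eq_of_le_card_inter h))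

end IsNAtom

theorem stmt5 {G : Type*} [Group G] [DecidableEq G]
    (hG : Monoid.IsTorsionFree G)
    (C : Finset G) (hC : 3 ≤ C.card) (U : Finset G) (hU : IsNAtom 2 C U) :
    U.card ≤ C.card - 1 := by
  obtain hU2 | hU3 := le_or_gt U.card 2
  · omega
  obtain ⟨c₀, hc₀⟩ := Finset.card_pos.1 (by omega : 0 < C.card)
  exact Finset.card_le_card_sub_one_of_exists_mul_eq
    (fun g hg => Nat.lt_succ_iff.1 (hU.card_inter_smul_lt hG two_pos hg)) hc₀
    (fun u hu => hU.exists_ne_mul_eq hU3 hu hc₀)
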